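/- Let (n_k)_{k≥0} be the sparse index sequence (n_0 = 0, n_{k+1} = n_k + 2^{k·(Σ_{i≤k} i)}) and set p_k = 2^{Σ_{i≤k} i}. Let r(n) = 2^{−k} if n = n_k and r(n) = 1 otherwise, and for x ∈ 2^ℕ with infinitely many 1s let C_m(x) = ∏_{i=0}^{m−1} r(n_i(x)), where n_0(x) < n_1(x) < ⋯ enumerates {n : x(n) = 1}. If x ∈ 2^ℕ has infinitely many 1s and the series Σ_{m=0}^∞ C_m(x) converges, then for infinitely many k, the number of indices i with n_k < i < n_{k+1} and x(i) = 1 is at most p_k. Equivalently, if for all but finitely many k the number of 1s of x strictly between n_k and n_{k+1} exceeds p_k, then Σ_{m=0}^∞ C_m(x) = ∞. -/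

import Mathlib

open MeasureTheory Filter Set ENNReal

/-- `μ` is the product of the marginal measures `m n` on `Bool`. -/
def IsProductMeasure (μ : Measure (ℕ → Bool)) (m : ℕ → Measure Bool) : Prop :=
  ∀ (s : Finset ℕ) (a : ℕ → Bool),
    μ {x | ∀ n ∈ s, x n = a n} = ∏ n ∈ s, m n {a n}

/-- The sparse index sequence: `n₀ = 0` and `n_{k+1} = n_k + 2 ^ (k · Σ_{i ≤ k} i)`. -/
def sparseSeq : ℕ → ℕ
  | 0 => 0
  | k + 1 => sparseSeq k + 2 ^ (k * ∑ i ∈ Finset.range (k + 1), i)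

/-- `p_k = 2 ^ (Σ_{i ≤ k} i)`. -/
def sparseP (k : ℕ) : ℕ := 2 ^ (∑ i ∈ Finset.range (k + 1), i)

/-- The marginals of the sparse measure: `m (n_k) {1} = 2^k/(2^k+1)` along the sparse index
sequence, and `m n {1} = 1/2` for `n` not of the form `n_k`. -/
def IsSparseMarginals (m : ℕ → Measure Bool) : Prop :=
  (∀ k : ℕ, m (sparseSeq k) {true} = (2 ^ k : ℝ≥0∞) / (2 ^ k + 1)) ∧
    ∀ n : ℕ, (∀ k : ℕ, n ≠ sparseSeq k) → m n {true} = 1 / 2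

/-- The multiplicative jump `m n {0} / m n {1}` of the sparse measure: `r (n_k) = 2⁻ᵏ` along the
sparse index sequence and `r n = 1` otherwise. -/
def IsSparseJump (r : ℕ → ℝ≥0∞) : Prop :=
  (∀ k : ℕ, r (sparseSeq k) = ((2 : ℝ≥0∞) ^ k)⁻¹) ∧
    ∀ n : ℕ, (∀ k : ℕ, n ≠ sparseSeq k) → r n = 1

/-- The number of indices `i` with `n_k < i < n_{k+1}` and `x i = 1`. -/
def onesBetween (x : ℕ → Bool) (k : ℕ) : ℕ :=
  ((Finset.Ioo (sparseSeq k) (sparseSeq (k + 1))).filter fun i => x i = true).card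

/-!
Let `c k` be the number of `1`s of `x` below `n_k`. For `m ≤ c (k + 1)` the first `m` ones of `x`
lie below `n_{k+1}`, so the only factors `r < 1` in `C_m(x)` come from `n_0, …, n_k`, and
`C_m(x) ≥ ∏_{j ≤ k} 2⁻ʲ = 1 / p_k`. If `x` has more than `p_k` ones strictly between `n_k` and
`n_{k+1}`, the block `c k < m ≤ c (k + 1)` therefore contributes at least `1` to `Σ C_m(x)`.
Blocks are disjoint, so a convergent series would force the block sums to tend to `0`.
-/

open Finset

lemma sparseSeq_strictMono : StrictMono sparseSeq :=
  strictMono_nat_of_lt_succ fun _ => Nat.lt_add_of_pos_right (Nat.two_pow_pos _)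

lemma Nat.count_add_card_filter_Ico (p : ℕ → Prop) [DecidablePred p] {a b : ℕ} (hab : a ≤ b) :
    Nat.count p a + #{n ∈ Ico a b | p n} = Nat.count p b := by
  rw [Nat.count_eq_card_filter_range, Nat.count_eq_card_filter_range, range_eq_Ico,
    range_eq_Ico, ← card_union_of_disjoint, ← filter_union,
    Finset.Ico_union_Ico_eq_Ico a.zero_le hab]
  exact disjoint_filter_filter (Ico_disjoint_Ico_consecutive 0 a b)

lemma onesBetween_le_count_sub (x : ℕ → Bool) (k : ℕ) :
    onesBetween x k ≤ Nat.count (fun n => x n = true) (sparseSeq (k + 1)) -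
      Nat.count (fun n => x n = true) (sparseSeq k) := by
  have hsplit := Nat.count_add_card_filter_Ico (fun n => x n = true)
    (sparseSeq_strictMono.monotone (by omega : k ≤ k + 1))
  have hsub : onesBetween x k ≤ #{n ∈ Ico (sparseSeq k) (sparseSeq (k + 1)) | x n = true} :=
    card_le_card (filter_subset_filter _ Ioo_subset_Ico_self)
  omega

lemma ENNReal.tendsto_sum_Ioc_of_tsum_ne_top {f : ℕ → ℝ≥0∞} (hf : ∑' m, f m ≠ ⊤) {c : ℕ → ℕ}
    (hc : Monotone c) : Tendsto (fun k => ∑ m ∈ Ioc (c k) (c (k + 1)), f m) atTop (nhds 0) := by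
  refine ENNReal.tendsto_atTop_zero_of_tsum_ne_top (ne_top_of_le_ne_top hf ?_)
  refine ENNReal.tsum_le_of_sum_range_le fun n => ?_
  have htelescope :
      ∑ k ∈ range n, ∑ m ∈ Ioc (c k) (c (k + 1)), f m = ∑ m ∈ Ioc (c 0) (c n), f m := by
    induction n with
    | zero => simp
    | succ n ih =>
      rw [sum_range_succ, ih, sum_Ioc_consecutive _ (hc n.zero_le) (hc n.le_succ)]
  exact htelescope ▸ ENNReal.sum_le_tsum _

namespace IsSparseJump

variable {r : ℕ → ℝ≥0∞} (hr : IsSparseJump r)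
include hr

lemma le_one (n : ℕ) : r n ≤ 1 := by
  by_cases h : ∃ k, n = sparseSeq k
  · obtain ⟨k, rfl⟩ := h
    rw [hr.1 k]
    exact ENNReal.inv_le_one.mpr (one_le_pow₀ one_le_two)
  · exact (hr.2 n (not_exists.mp h)).le

lemma prod_sparseSeq (k : ℕ) :
    ∏ j ∈ range (k + 1), r (sparseSeq j) = ((sparseP k : ℝ≥0∞))⁻¹ := by
  simp_rw [hr.1, ENNReal.inv_pow]
  rw [Finset.prod_pow_eq_pow_sum, sparseP]
  push_cast
  exact ENNReal.inv_pow.symm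

lemma inv_sparseP_le_prod {N : ℕ → ℕ} (hN : Function.Injective N) {m k : ℕ}
    (hlt : ∀ i < m, N i < sparseSeq (k + 1)) :
    ((sparseP k : ℝ≥0∞))⁻¹ ≤ ∏ i ∈ range m, r (N i) := by
  rw [← hr.prod_sparseSeq, ← prod_image fun a _ b _ hab => sparseSeq_strictMono.injective hab,
    ← prod_image fun a _ b _ hab => hN hab]
  calc ∏ n ∈ (range (k + 1)).image sparseSeq, r n
      ≤ ∏ n ∈ (range m).image N ∩ (range (k + 1)).image sparseSeq, r n :=
        prod_le_prod_of_subset_of_le_one' inter_subset_right fun n _ _ => hr.le_one n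
    _ = ∏ n ∈ (range m).image N, r n := by
        refine prod_subset inter_subset_left fun n hn hns => hr.2 n fun j hj => ?_
        obtain ⟨i, hi, rfl⟩ := mem_image.mp hn
        have hjk : j < k + 1 :=
          sparseSeq_strictMono.lt_iff_lt.mp (hj ▸ hlt i (mem_range.mp hi))
        exact hns (mem_inter.mpr ⟨hn, mem_image.mpr ⟨j, mem_range.mpr hjk, hj.symm⟩⟩)

lemma one_le_sum_Ioc_count {x : ℕ → Bool} (hx : {n : ℕ | x n = true}.Infinite) {k : ℕ}
    (hk : sparseP k ≤ onesBetween x k) :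
    1 ≤ ∑ m ∈ Ioc (Nat.count (fun n => x n = true) (sparseSeq k))
      (Nat.count (fun n => x n = true) (sparseSeq (k + 1))),
        ∏ i ∈ range m, r (Nat.nth (fun n => x n = true) i) := by
  have hP : (sparseP k : ℝ≥0∞) ≠ 0 := Nat.cast_ne_zero.mpr (Nat.two_pow_pos _).ne'
  calc (1 : ℝ≥0∞) = sparseP k * ((sparseP k : ℝ≥0∞))⁻¹ :=
        (ENNReal.mul_inv_cancel hP (natCast_ne_top _)).symm
    _ ≤ #(Ioc (Nat.count (fun n => x n = true) (sparseSeq k))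
          (Nat.count (fun n => x n = true) (sparseSeq (k + 1)))) • ((sparseP k : ℝ≥0∞))⁻¹ := by
        rw [nsmul_eq_mul, Nat.card_Ioc]
        gcongr
        exact_mod_cast hk.trans (onesBetween_le_count_sub x k)
    _ ≤ _ := card_nsmul_le_sum _ _ _ fun m hm => hr.inv_sparseP_le_prod (Nat.nth_injective hx)
        fun i hi => Nat.nth_lt_of_lt_count (hi.trans_le (mem_Ioc.mp hm).2)

end IsSparseJump

/-- deterministic: if `x` has infinitely many `1`s and its cocycle series
`Σ_m C m x` converges (is finite), then for infinitely many `k` the number of `1`s of `x`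
strictly between `n_k` and `n_{k+1}` is at most `p_k`.  Equivalently, if for all but finitely
many `k` that number exceeds `p_k`, then the series diverges to `+∞`. -/
theorem sparse_summable_implies_few_ones
    (r : ℕ → ℝ≥0∞) (hr : IsSparseJump r)
    (x : ℕ → Bool) (hx : {n : ℕ | x n = true}.Infinite) :
    ((∑' k : ℕ, ∏ i ∈ Finset.range k, r (Nat.nth (fun n => x n = true) i)) ≠ ⊤ →
        {k : ℕ | onesBetween x k ≤ sparseP k}.Infinite) ∧
      ((∀ᶠ k in atTop, sparseP k < onesBetween x k) →
        (∑' k : ℕ, ∏ i ∈ Finset.range k, r (Nat.nth (fun n => x n = true) i)) = ⊤) := by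
  set C : ℕ → ℝ≥0∞ := fun m => ∏ i ∈ Finset.range m, r (Nat.nth (fun n => x n = true) i)
  have hdiverges : (∀ᶠ k in atTop, sparseP k < onesBetween x k) → ∑' m, C m = ⊤ := by
    intro hmany
    by_contra hfinite
    have hblocks := ENNReal.tendsto_sum_Ioc_of_tsum_ne_top hfinite
      ((Nat.count_monotone (fun n => x n = true)).comp sparseSeq_strictMono.monotone)
    obtain ⟨k, hsmall, hk⟩ := ((hblocks.eventually (gt_mem_nhds one_pos)).and hmany).exists
    exact (hr.one_le_sum_Ioc_count hx hk.le).not_gt hsmall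
  refine ⟨fun hfinite => ?_, hdiverges⟩
  by_contra hfew
  have hmany := (Set.not_infinite.mp hfew).eventually_cofinite_notMem
  rw [Nat.cofinite_eq_atTop] at hmany
  exact hfinite (hdiverges (hmany.mono fun k hk => not_le.mp hk))
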